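/- If A is (c_A,γ_sys)-SED, B is (c_B,γ_sys)-SED, and K is (c_K,γ_sys)-SED (as block matrices over the same N agents with compatible dimensions), then the closed-loop matrix A + BK is (c_A + N·c_B·c_K, γ_sys)-SED. -/
import Mathlib


open Matrix

/-- Operator (induced l2) norm of a real matrix. -/
noncomputable def opNorm {α β : Type*} [Fintype α] [Fintype β] [DecidableEq β]
    (X : Matrix α β ℝ) : ℝ :=
  ‖LinearMap.toContinuousLinearMap (Matrix.toEuclideanLin X)‖

/-- Block `(l,j)` of a block-partitioned matrix. -/
def blk {N : ℕ} {n m : Fin N → ℕ}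
    (X : Matrix ((l : Fin N) × Fin (n l)) ((j : Fin N) × Fin (m j)) ℝ)
    (l j : Fin N) : Matrix (Fin (n l)) (Fin (m j)) ℝ :=
  fun a b => X ⟨l, a⟩ ⟨j, b⟩

/-- Block row of agent `i`. -/
def blkRow {N : ℕ} {n m : Fin N → ℕ}
    (K : Matrix ((l : Fin N) × Fin (m l)) ((j : Fin N) × Fin (n j)) ℝ)
    (i : Fin N) : Matrix (Fin (m i)) ((j : Fin N) × Fin (n j)) ℝ :=
  fun a b => K ⟨i, a⟩ b

/-- Zero-padded version of a diagonal block. -/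
def pad {N : ℕ} {n : Fin N → ℕ} (i : Fin N) (M : Matrix (Fin (n i)) (Fin (n i)) ℝ) :
    Matrix ((l : Fin N) × Fin (n l)) ((j : Fin N) × Fin (n j)) ℝ :=
  fun a b => if ha : a.1 = i then (if hb : b.1 = i then M (ha ▸ a.2) (hb ▸ b.2) else 0) else 0

/-- κ-truncation relative to agent `i`. -/
noncomputable def trunc {N : ℕ} {n m : Fin N → ℕ} (dist : Fin N → Fin N → ℝ) (i : Fin N) (κ : ℝ)
    (X : Matrix ((l : Fin N) × Fin (n l)) ((j : Fin N) × Fin (m j)) ℝ) :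
    Matrix ((l : Fin N) × Fin (n l)) ((j : Fin N) × Fin (m j)) ℝ :=
  fun a b => if max (dist i a.1) (dist i b.1) < κ then X a b else 0

/-- `X` is `(c,γ)`-spatially exponentially decaying. -/
def IsSED {N : ℕ} {n m : Fin N → ℕ} (dist : Fin N → Fin N → ℝ) (c γ : ℝ)
    (X : Matrix ((l : Fin N) × Fin (n l)) ((j : Fin N) × Fin (m j)) ℝ) : Prop :=
  ∀ l j : Fin N, opNorm (blk X l j) ≤ c * Real.exp (-γ * dist l j)

/-- `X` is `(c,γ)`-SED away from agent `i`. -/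
def IsSEDAway {N : ℕ} {n m : Fin N → ℕ} (dist : Fin N → Fin N → ℝ) (i : Fin N) (c γ : ℝ)
    (X : Matrix ((l : Fin N) × Fin (n l)) ((j : Fin N) × Fin (m j)) ℝ) : Prop :=
  ∀ l j : Fin N, opNorm (blk X l j) ≤ c * Real.exp (-γ * max (dist i l) (dist i j))

/-- `X` is `(τ,ρ)`-stable. -/
def IsStable {α : Type*} [Fintype α] [DecidableEq α] (τ ρ : ℝ) (X : Matrix α α ℝ) : Prop :=
  ∀ k : ℕ, opNorm (X ^ k) ≤ τ * Real.exp (-ρ * (k : ℝ))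

open scoped Matrix.Norms.L2Operator

lemma opNorm_eq_norm {α β : Type*} [Fintype α] [Fintype β] [DecidableEq β]
    (X : Matrix α β ℝ) : opNorm X = ‖X‖ := rfl

lemma blk_decomp {N : ℕ} {n m : Fin N → ℕ}
    (A : Matrix ((l : Fin N) × Fin (n l)) ((j : Fin N) × Fin (n j)) ℝ)
    (B : Matrix ((l : Fin N) × Fin (n l)) ((j : Fin N) × Fin (m j)) ℝ)
    (K : Matrix ((l : Fin N) × Fin (m l)) ((j : Fin N) × Fin (n j)) ℝ)
    (l j : Fin N) :
    blk (A + B * K) l j = blk A l j + ∑ k : Fin N, blk B l k * blk K k j := by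
  funext a b
  simp only [blk, Matrix.add_apply, Matrix.mul_apply, Finset.sum_apply, Matrix.sum_apply]
  congr 1
  rw [← Finset.univ_sigma_univ, Finset.sum_sigma]

/-- if `A`, `B`, `K` are `(c_A,γ_sys)`-, `(c_B,γ_sys)`-, `(c_K,γ_sys)`-SED
respectively, then the closed-loop matrix `A + BK` is `(c_A + N c_B c_K, γ_sys)`-SED. -/
theorem closed_loop_SED
    {N : ℕ} (n m : Fin N → ℕ) (dist : Fin N → Fin N → ℝ)
    (hdist_nonneg : ∀ l j, 0 ≤ dist l j)
    (hdist_symm : ∀ l j, dist l j = dist j l)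
    (hdist_tri : ∀ l j k, dist l j ≤ dist l k + dist k j)
    (cA cB cK γsys : ℝ) (hγ : 0 ≤ γsys)
    (A : Matrix ((l : Fin N) × Fin (n l)) ((j : Fin N) × Fin (n j)) ℝ)
    (B : Matrix ((l : Fin N) × Fin (n l)) ((j : Fin N) × Fin (m j)) ℝ)
    (K : Matrix ((l : Fin N) × Fin (m l)) ((j : Fin N) × Fin (n j)) ℝ)
    (hA : IsSED dist cA γsys A) (hB : IsSED dist cB γsys B)
    (hK : IsSED dist cK γsys K) :
    IsSED dist (cA + (N : ℝ) * cB * cK) γsys (A + B * K) := by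
  intro l j
  have hcB : 0 ≤ cB := by
    have h := hB l l
    have h0 : (0 : ℝ) ≤ opNorm (blk B l l) := by rw [opNorm_eq_norm]; exact norm_nonneg _
    nlinarith [Real.exp_pos (-γsys * dist l l), (h0.trans h)]
  have hcK : 0 ≤ cK := by
    have h := hK l l
    have h0 : (0 : ℝ) ≤ opNorm (blk K l l) := by rw [opNorm_eq_norm]; exact norm_nonneg _
    nlinarith [Real.exp_pos (-γsys * dist l l), (h0.trans h)]
  have hexp_pos : (0 : ℝ) < Real.exp (-γsys * dist l j) := Real.exp_pos _
  rw [opNorm_eq_norm, blk_decomp]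
  calc ‖blk A l j + ∑ k : Fin N, blk B l k * blk K k j‖
      ≤ ‖blk A l j‖ + ‖∑ k : Fin N, blk B l k * blk K k j‖ := norm_add_le _ _
    _ ≤ ‖blk A l j‖ + ∑ k : Fin N, ‖blk B l k * blk K k j‖ := by
        gcongr; exact norm_sum_le _ _
    _ ≤ cA * Real.exp (-γsys * dist l j)
        + ∑ k : Fin N, cB * cK * Real.exp (-γsys * dist l j) := by
        gcongr with k _
        · rw [← opNorm_eq_norm]; exact hA l j
        · calc ‖blk B l k * blk K k j‖
              ≤ ‖blk B l k‖ * ‖blk K k j‖ := Matrix.l2_opNorm_mul _ _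
            _ ≤ (cB * Real.exp (-γsys * dist l k)) * (cK * Real.exp (-γsys * dist k j)) := by
                have h1 := hB l k; have h2 := hK k j
                rw [opNorm_eq_norm] at h1 h2
                exact mul_le_mul h1 h2 (norm_nonneg _)
                  (by positivity)
            _ = cB * cK * Real.exp (-γsys * (dist l k + dist k j)) := by
                rw [show -γsys * (dist l k + dist k j)
                    = -γsys * dist l k + -γsys * dist k j by ring, Real.exp_add]; ring
            _ ≤ cB * cK * Real.exp (-γsys * dist l j) :=
                mul_le_mul_of_nonneg_left
                  (Real.exp_le_exp.mpr (by nlinarith [hdist_tri l j k]))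
                  (mul_nonneg hcB hcK)
    _ = (cA + (N : ℝ) * cB * cK) * Real.exp (-γsys * dist l j) := by
        rw [Finset.sum_const, Finset.card_univ, Fintype.card_fin]
        push_cast; ring
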